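/- Let r > 0 and let X, Y be real random variables whose moments of order k agree for all integers 0 ≤ k ≤ ⌈r⌉ - 1, and which have finite absolute moments of order r. Then d_r(X,Y) = sup_{ξ ≠ 0} |f̂_X(ξ) - f̂_Y(ξ)|/|ξ|^r is finite. -/

import Mathlib

/-!
Let `R_m(x) = e^{ix} - ∑_{k < m} (ix)^k / k!` (`expIRem m x`) and `n = ⌈r⌉ - 1`, so `n ≤ r ≤ n + 1`.
Since the moments of order `≤ n` agree, the degree-`n` Taylor parts of `e^{-iξX}` and `e^{-iξY}`
have the same mean, so `f̂_X(ξ) - f̂_Y(ξ) = E R_{n+1}(-ξX) - E R_{n+1}(-ξY)`.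
Integrating `R_{m+1}' = i R_m` gives `|R_m(x)| ≤ |x|^m / m!`, hence also
`|R_{n+1}(x)| ≤ 2|x|^n / n!`; the first bound wins for `|x| ≤ 1`, the second for `|x| ≥ 1`, and
together they give `|R_{n+1}(x)| ≤ 2|x|^r`. Thus `|f̂_X(ξ) - f̂_Y(ξ)| ≤ 2 (E|X|^r + E|Y|^r) |ξ|^r`.
-/

open MeasureTheory
open scoped ENNReal

variable {Ω : Type*} [MeasureSpace Ω]

/-- Characteristic function of a real random variable. -/
noncomputable def charFn (X : Ω → ℝ) (ξ : ℝ) : ℂ :=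
  ∫ ω, Complex.exp (-Complex.I * ξ * X ω)

/-- The Fourier-based metric d_r, with values in the extended nonnegative reals. -/
noncomputable def fourierDist (r : ℝ) (X Y : Ω → ℝ) : ℝ≥0∞ :=
  ⨆ ξ : {ξ : ℝ // ξ ≠ 0},
    ENNReal.ofReal (‖charFn X ξ.1 - charFn Y ξ.1‖ / |ξ.1| ^ r)

open Complex ComplexConjugate

noncomputable def expIRem (n : ℕ) (x : ℝ) : ℂ :=
  exp (I * x) - ∑ k ∈ Finset.range n, (I * x) ^ k / k.factorial

lemma hasDerivAt_I_mul_pow_succ_div_factorial (n : ℕ) (x : ℝ) :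
    HasDerivAt (fun t : ℝ => (I * t) ^ (n + 1) / (n + 1).factorial)
      (I * ((I * x) ^ n / n.factorial)) x := by
  refine ((((hasDerivAt_id x).ofReal_comp).const_mul I).fun_pow (n + 1)).div_const _
    |>.congr_deriv ?_
  rw [Nat.factorial_succ]
  push_cast
  field_simp
  simp

lemma hasDerivAt_expIRem_succ (n : ℕ) (x : ℝ) :
    HasDerivAt (expIRem (n + 1)) (I * expIRem n x) x := by
  have hexp : HasDerivAt (fun t : ℝ => exp (I * t)) (I * exp (I * x)) x := by
    simpa [mul_comm] using (((hasDerivAt_id x).ofReal_comp).const_mul I).cexp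
  have hsum := (HasDerivAt.fun_sum fun k (_ : k ∈ Finset.range n) =>
    hasDerivAt_I_mul_pow_succ_div_factorial k x).const_add 1
  have hfun : expIRem (n + 1) = fun t : ℝ => exp (I * t)
      - (1 + ∑ k ∈ Finset.range n, (I * t) ^ (k + 1) / (k + 1).factorial) := by
    ext t
    simp [expIRem, Finset.sum_range_succ', add_comm]
  rw [hfun, expIRem, mul_sub, Finset.mul_sum]
  exact hexp.sub hsum

lemma expIRem_succ_zero (n : ℕ) : expIRem (n + 1) 0 = 0 := by
  simp [expIRem, Finset.sum_range_succ']

lemma expIRem_succ (n : ℕ) (x : ℝ) :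
    expIRem (n + 1) x = expIRem n x - (I * x) ^ n / n.factorial := by
  simp only [expIRem, Finset.sum_range_succ]
  ring

lemma expIRem_neg (n : ℕ) (x : ℝ) : expIRem n (-x) = conj (expIRem n x) := by
  simp [expIRem, map_sum, ← exp_conj, map_div₀, conj_ofReal]

lemma continuous_expIRem (n : ℕ) : Continuous (expIRem n) := by
  unfold expIRem
  fun_prop

lemma expIRem_succ_eq_integral (n : ℕ) (x : ℝ) :
    expIRem (n + 1) x = ∫ t in (0 : ℝ)..x, I * expIRem n t := by
  rw [intervalIntegral.integral_eq_sub_of_hasDerivAt (fun t _ => hasDerivAt_expIRem_succ n t)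
    ((continuous_const.mul (continuous_expIRem n)).intervalIntegrable 0 x),
    expIRem_succ_zero, sub_zero]

lemma norm_expIRem_le_of_nonneg (n : ℕ) {x : ℝ} (hx : 0 ≤ x) :
    ‖expIRem n x‖ ≤ x ^ n / n.factorial := by
  induction n generalizing x with
  | zero => simp [expIRem, norm_exp_I_mul_ofReal]
  | succ n ih =>
    calc ‖expIRem (n + 1) x‖ ≤ ∫ t in (0 : ℝ)..x, ‖I * expIRem n t‖ := by
          rw [expIRem_succ_eq_integral]
          exact intervalIntegral.norm_integral_le_integral_norm hx
      _ ≤ ∫ t in (0 : ℝ)..x, t ^ n / n.factorial := by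
          refine intervalIntegral.integral_mono_on hx
            ((continuous_const.mul (continuous_expIRem n)).norm.intervalIntegrable 0 x)
            ((continuous_pow n).div_const _ |>.intervalIntegrable 0 x) fun t ht => ?_
          simpa using ih ht.1
      _ = x ^ (n + 1) / (n + 1).factorial := by
          rw [intervalIntegral.integral_div, integral_pow, Nat.factorial_succ]
          push_cast
          field_simp
          simp

lemma norm_expIRem_le (n : ℕ) (x : ℝ) : ‖expIRem n x‖ ≤ |x| ^ n / n.factorial := by
  have h_abs : ‖expIRem n x‖ = ‖expIRem n |x|‖ := by
    rcases abs_choice x with h | h <;> rw [h]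
    rw [expIRem_neg, norm_conj]
  rw [h_abs]
  exact norm_expIRem_le_of_nonneg n (abs_nonneg x)

lemma norm_expIRem_succ_le (n : ℕ) (x : ℝ) :
    ‖expIRem (n + 1) x‖ ≤ 2 * |x| ^ n / n.factorial := by
  calc ‖expIRem (n + 1) x‖ ≤ ‖expIRem n x‖ + ‖(I * x) ^ n / n.factorial‖ := by
        rw [expIRem_succ]
        exact norm_sub_le _ _
    _ ≤ |x| ^ n / n.factorial + |x| ^ n / n.factorial := by
        gcongr
        · exact norm_expIRem_le n x
        · simp
    _ = 2 * |x| ^ n / n.factorial := by ring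

lemma norm_expIRem_succ_le_rpow {n : ℕ} {r : ℝ} (hnr : n ≤ r) (hrn : r ≤ n + 1) (x : ℝ) :
    ‖expIRem (n + 1) x‖ ≤ 2 * |x| ^ r := by
  have one_le_factorial (m : ℕ) : (1 : ℝ) ≤ m.factorial := Nat.one_le_cast.mpr m.factorial_pos
  rcases le_total |x| 1 with hx | hx
  · calc ‖expIRem (n + 1) x‖ ≤ |x| ^ (n + 1) / (n + 1).factorial := norm_expIRem_le _ x
      _ ≤ |x| ^ ((n + 1 : ℕ) : ℝ) := by
          rw [Real.rpow_natCast]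
          exact div_le_self (by positivity) (one_le_factorial _)
      _ ≤ |x| ^ r := Real.rpow_le_rpow_of_exponent_ge' (abs_nonneg x) hx
          ((Nat.cast_nonneg n).trans hnr) (by push_cast; exact hrn)
      _ ≤ 2 * |x| ^ r := le_mul_of_one_le_left (by positivity) one_le_two
  · calc ‖expIRem (n + 1) x‖ ≤ 2 * |x| ^ n / n.factorial := norm_expIRem_succ_le n x
      _ ≤ 2 * |x| ^ (n : ℝ) := by
          rw [Real.rpow_natCast]
          exact div_le_self (by positivity) (one_le_factorial _)
      _ ≤ 2 * |x| ^ r := by gcongr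

lemma expIRem_neg_mul (N : ℕ) (ξ x : ℝ) :
    expIRem N (-(ξ * x)) =
      exp (-I * ξ * x) - ∑ k ∈ Finset.range N, (-I * ξ) ^ k / k.factorial * ((x ^ k : ℝ) : ℂ) := by
  simp only [expIRem]
  push_cast
  congr 1
  · ring_nf
  · exact Finset.sum_congr rfl fun k _ => by ring

section CharFn

variable {X Y : Ω → ℝ}

lemma integral_expIRem_neg_mul [IsFiniteMeasure (volume : Measure Ω)] {N : ℕ}
    (hX : Measurable X) (hint : ∀ k < N, Integrable (fun ω => X ω ^ k)) (ξ : ℝ) :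
    ∫ ω, expIRem N (-(ξ * X ω)) = charFn X ξ
      - ∑ k ∈ Finset.range N, (-I * ξ) ^ k / k.factorial * ((∫ ω, X ω ^ k : ℝ) : ℂ) := by
  have hexp : Integrable (fun ω => exp (-I * ξ * X ω)) :=
    Integrable.of_bound (by fun_prop) 1 (ae_of_all _ fun ω => by
      rw [norm_exp]; simp)
  have hterm : ∀ k ∈ Finset.range N,
      Integrable (fun ω => (-I * ξ) ^ k / k.factorial * ((X ω ^ k : ℝ) : ℂ)) :=
    fun k hk => ((hint k (Finset.mem_range.mp hk)).ofReal).const_mul _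
  simp_rw [expIRem_neg_mul]
  rw [integral_sub hexp (integrable_finsetSum _ hterm), integral_finsetSum _ hterm, charFn]
  congr 1
  refine Finset.sum_congr rfl fun k _ => ?_
  rw [integral_const_mul, integral_complex_ofReal]

lemma norm_integral_expIRem_neg_mul_le {n : ℕ} {r : ℝ} (hnr : n ≤ r) (hrn : r ≤ n + 1)
    (hXr : Integrable (fun ω => |X ω| ^ r)) (ξ : ℝ) :
    ‖∫ ω, expIRem (n + 1) (-(ξ * X ω))‖ ≤ 2 * |ξ| ^ r * ∫ ω, |X ω| ^ r := by
  rw [← integral_const_mul]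
  refine norm_integral_le_of_norm_le (hXr.const_mul _) (ae_of_all _ fun ω => ?_)
  calc ‖expIRem (n + 1) (-(ξ * X ω))‖ ≤ 2 * |-(ξ * X ω)| ^ r :=
        norm_expIRem_succ_le_rpow hnr hrn _
    _ = 2 * |ξ| ^ r * |X ω| ^ r := by
        rw [abs_neg, abs_mul, Real.mul_rpow (abs_nonneg _) (abs_nonneg _), mul_assoc]

lemma norm_charFn_sub_le [IsFiniteMeasure (volume : Measure Ω)] {n : ℕ} {r : ℝ}
    (hnr : n ≤ r) (hrn : r ≤ n + 1) (hX : Measurable X) (hY : Measurable Y)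
    (hint : ∀ k < n + 1, Integrable (fun ω => X ω ^ k) ∧ Integrable (fun ω => Y ω ^ k))
    (hmom : ∀ k < n + 1, ∫ ω, X ω ^ k = ∫ ω, Y ω ^ k)
    (hXr : Integrable (fun ω => |X ω| ^ r)) (hYr : Integrable (fun ω => |Y ω| ^ r)) (ξ : ℝ) :
    ‖charFn X ξ - charFn Y ξ‖ ≤ 2 * ((∫ ω, |X ω| ^ r) + ∫ ω, |Y ω| ^ r) * |ξ| ^ r := by
  have h_diff : charFn X ξ - charFn Y ξ =
      (∫ ω, expIRem (n + 1) (-(ξ * X ω))) - ∫ ω, expIRem (n + 1) (-(ξ * Y ω)) := by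
    rw [integral_expIRem_neg_mul hX (fun k hk => (hint k hk).1),
      integral_expIRem_neg_mul hY (fun k hk => (hint k hk).2)]
    rw [Finset.sum_congr rfl fun k hk => by rw [hmom k (Finset.mem_range.mp hk)]]
    ring
  calc ‖charFn X ξ - charFn Y ξ‖
      ≤ ‖∫ ω, expIRem (n + 1) (-(ξ * X ω))‖ + ‖∫ ω, expIRem (n + 1) (-(ξ * Y ω))‖ := by
        rw [h_diff]
        exact norm_sub_le _ _
    _ ≤ 2 * |ξ| ^ r * (∫ ω, |X ω| ^ r) + 2 * |ξ| ^ r * ∫ ω, |Y ω| ^ r :=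
        add_le_add (norm_integral_expIRem_neg_mul_le hnr hrn hXr ξ)
          (norm_integral_expIRem_neg_mul_le hnr hrn hYr ξ)
    _ = 2 * ((∫ ω, |X ω| ^ r) + ∫ ω, |Y ω| ^ r) * |ξ| ^ r := by ring

lemma fourierDist_lt_top_of_norm_le {r : ℝ} (C : ℝ)
    (h : ∀ ξ ≠ 0, ‖charFn X ξ - charFn Y ξ‖ ≤ C * |ξ| ^ r) : fourierDist r X Y < ⊤ := by
  refine (iSup_le fun ξ => ENNReal.ofReal_le_ofReal ?_).trans_lt (ENNReal.ofReal_lt_top (r := C))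
  rw [div_le_iff₀ (Real.rpow_pos_of_pos (abs_pos.mpr ξ.2) r)]
  exact h ξ.1 ξ.2

end CharFn

/-- If X and Y have equal moments up to order ⌈r⌉ - 1 and finite absolute
moments of order r, then the Fourier metric d_r(X,Y) is finite. -/
theorem fourierDist_lt_top [IsProbabilityMeasure (volume : Measure Ω)]
    (r : ℝ) (hr : 0 < r) (X Y : Ω → ℝ)
    (hXm : Measurable X) (hYm : Measurable Y)
    (hmom : ∀ k : ℕ, (k : ℤ) ≤ ⌈r⌉ - 1 → ∫ ω, (X ω) ^ k = ∫ ω, (Y ω) ^ k)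
    (hmomint : ∀ k : ℕ, (k : ℤ) ≤ ⌈r⌉ - 1 →
      Integrable (fun ω => (X ω) ^ k) ∧ Integrable (fun ω => (Y ω) ^ k))
    (hXr : Integrable (fun ω => |X ω| ^ r))
    (hYr : Integrable (fun ω => |Y ω| ^ r)) :
    fourierDist r X Y < ⊤ := by
  obtain ⟨n, hn⟩ : ∃ n : ℕ, ⌈r⌉ = n + 1 :=
    ⟨(⌈r⌉ - 1).toNat, by have := Int.ceil_pos.mpr hr; omega⟩
  have hn_real : ((⌈r⌉ : ℤ) : ℝ) = n + 1 := by exact_mod_cast hn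
  have hnr : (n : ℝ) ≤ r := by linarith [Int.ceil_lt_add_one r]
  have hrn : r ≤ n + 1 := hn_real ▸ Int.le_ceil r
  have hk : ∀ k < n + 1, (k : ℤ) ≤ ⌈r⌉ - 1 := fun k hk => by omega
  exact fourierDist_lt_top_of_norm_le _ fun ξ _ =>
    norm_charFn_sub_le hnr hrn hXm hYm (fun k h => hmomint k (hk k h))
      (fun k h => hmom k (hk k h)) hXr hYr ξ
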